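/- Fix indices 1 ≤ i < k ≤ n + 1 and set ℓ = k − i. Let B ⊆ {1, ..., n} be any nonempty set with |B| = ℓ and ∑_{j∈B} s_j ≤ C, let r be the smallest index such that p_r = max_{j∈B} p_j, and let B_r be any set attaining g_r(C, ℓ). Then c̄_{ikB} ≥ (n − i + 1)·(max_{j∈B_r} p_j) − g_r(C, ℓ) − (u_i − u_k) = c̄_{ikB_r}. -/
import Mathlib

lemma pmono (n : ℕ) (p : ℕ → ℕ) (hp : ∀ j, 1 ≤ j → j < n → p (j + 1) ≤ p j)
    (a b : ℕ) (ha : 1 ≤ a) (hab : a ≤ b) (hb : b ≤ n) : p b ≤ p a := by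
  induction b with
  | zero => omega
  | succ m ih =>
    rcases Nat.lt_or_ge a (m+1) with h | h
    · have hm : a ≤ m := by omega
      calc p (m+1) ≤ p m := hp m (by omega) (by omega)
        _ ≤ p a := ih hm (by omega)
    · have : a = m + 1 := by omega
      simp [this]

/-- With jobs in LPT order, indices `1 ≤ i < k ≤ n+1` and `ℓ = k − i`:
for any nonempty feasible batch `B` of cardinality `ℓ`, if `r` is the smallest index with
`p r = max_{j∈B} p j` and `Br` is a set attaining `g_r(C, ℓ)`, then
`c̄_{ikB} ≥ (n − i + 1)·(max_{j∈Br} p j) − g_r(C, ℓ) − (u i − u k) = c̄_{ikBr}`. -/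
theorem stmt3 (n : ℕ) (p s : ℕ → ℕ) (v u : ℕ → ℝ) (Cap : ℕ)
    (i k : ℕ) (hi : 1 ≤ i) (hik : i < k) (hk : k ≤ n + 1)
    (hp : ∀ j, 1 ≤ j → j < n → p (j + 1) ≤ p j)
    (B : Finset ℕ) (hBne : B.Nonempty)
    (hB : B ⊆ Finset.Icc 1 n) (hBcard : B.card = k - i) (hBsize : ∑ j ∈ B, s j ≤ Cap)
    (r : ℕ) (hr : IsLeast {j : ℕ | 1 ≤ j ∧ j ≤ n ∧ p j = B.sup p} r)
    (Br : Finset ℕ)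
    (hBr1 : Br ⊆ Finset.Icc r n) (hBr2 : Br.card = k - i) (hBr3 : ∑ j ∈ Br, s j ≤ Cap)
    (hBropt : ∀ B' : Finset ℕ, B' ⊆ Finset.Icc r n → B'.card = k - i →
      ∑ j ∈ B', s j ≤ Cap → ∑ j ∈ B', v j ≤ ∑ j ∈ Br, v j) :
    ((n : ℝ) - (i : ℝ) + 1) * ((B.sup p : ℕ) : ℝ) - (∑ j ∈ B, v j) - (u i - u k) ≥
      ((n : ℝ) - (i : ℝ) + 1) * ((Br.sup p : ℕ) : ℝ) - (∑ j ∈ Br, v j) - (u i - u k) := by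
  obtain ⟨⟨hr1, hrn, hrp⟩, hrmin⟩ := hr
  -- B ⊆ Icc r n
  have hBsub : B ⊆ Finset.Icc r n := by
    intro j hj
    have hj' := hB hj
    rw [Finset.mem_Icc] at hj' ⊢
    refine ⟨?_, hj'.2⟩
    by_contra h
    push_neg at h
    have hle : p j ≤ B.sup p := Finset.le_sup hj
    have hge : p r ≤ p j := pmono n p hp j r hj'.1 (by omega) hrn
    have : p j = B.sup p := by omega
    have := hrmin ⟨hj'.1, hj'.2, this⟩
    omega
  have hv : ∑ j ∈ B, v j ≤ ∑ j ∈ Br, v j := hBropt B hBsub hBcard hBsize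
  -- Br.sup p ≤ B.sup p
  have hsup : Br.sup p ≤ B.sup p := by
    rw [← hrp]
    apply Finset.sup_le
    intro j hj
    have hj' := Finset.mem_Icc.mp (hBr1 hj)
    exact pmono n p hp r j hr1 hj'.1 hj'.2
  have hcoef : (0:ℝ) ≤ (n : ℝ) - (i : ℝ) + 1 := by
    have : i ≤ n := by omega
    have : (i:ℝ) ≤ (n:ℝ) := by exact_mod_cast this
    linarith
  have hsup' : ((Br.sup p : ℕ) : ℝ) ≤ ((B.sup p : ℕ) : ℝ) := by exact_mod_cast hsup
  nlinarith [mul_le_mul_of_nonneg_left hsup' hcoef]
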